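/- (Faà di Bruno's formula via Bell polynomials) Let s₁ and s₂ be real functions that are i-times continuously differentiable on suitable domains. Then the i-th derivative of the composition satisfies dⁱ/dtⁱ [s₁(s₂(t))] = ∑_{j=1}^{i} s₁^{(j)}(s₂(t)) · B_{i,j}(s₂^{(1)}(t), …, s₂^{(i−j+1)}(t)), where B_{i,j} are the partial Bell polynomials. -/

import Mathlib

/-! Differentiating once gives `(f ∘ g)' = g' · (f' ∘ g)`. Applying the Leibniz rule to the `n`-th
derivative of this product, and the formula for `n - j < n + 1` derivatives to `f' ∘ g`, produces
the double sum `∑ₘ f⁽ᵐ⁺¹⁾(g t) ∑ⱼ C(n, j) g⁽ʲ⁺¹⁾(t) B_{n-j,m}`, whose inner sum is exactly the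
recurrence defining `B_{n+1,m+1}`. -/

open Set Filter Topology

/-- Partial Bell polynomials B_{n,m}(s₁,…,s_{n−m+1}), via the recurrence
B_{n,m} = ∑_{i=1}^{n−m+1} C(n−1,i−1)·s_i·B_{n−i,m−1}, B_{0,0}=1,
B_{n,0}=0 (n≥1), B_{0,m}=0 (m≥1).  The argument vector is given as a
function `s : ℕ → ℝ` (indices starting at 1). -/
def bellPoly : ℕ → ℕ → (ℕ → ℝ) → ℝ
  | 0, 0, _ => 1
  | _ + 1, 0, _ => 0
  | 0, _ + 1, _ => 0
  | n + 1, m + 1, s =>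
      ∑ j ∈ Finset.range (n + 1), (n.choose j : ℝ) * s (j + 1) * bellPoly (n - j) m s

theorem bellPoly_succ_zero (n : ℕ) (s : ℕ → ℝ) : bellPoly (n + 1) 0 s = 0 := rfl

theorem bellPoly_succ_succ (n m : ℕ) (s : ℕ → ℝ) :
    bellPoly (n + 1) (m + 1) s
      = ∑ j ∈ Finset.range (n + 1), (n.choose j : ℝ) * s (j + 1) * bellPoly (n - j) m s :=
  rfl

theorem bellPoly_eq_zero_of_lt {n m : ℕ} (s : ℕ → ℝ) (h : n < m) : bellPoly n m s = 0 := by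
  induction n using Nat.strong_induction_on generalizing m with
  | _ n ih =>
    match n, m, h with
    | 0, _ + 1, _ => rfl
    | n + 1, m + 1, h =>
      rw [bellPoly_succ_succ]
      exact Finset.sum_eq_zero fun j hj => by
        rw [ih (n - j) (by omega) (by omega), mul_zero]

theorem sum_range_mul_bellPoly_of_le {k n : ℕ} (hkn : k ≤ n) (a : ℕ → ℝ) (s : ℕ → ℝ) :
    ∑ m ∈ Finset.range (k + 1), a m * bellPoly k m s
      = ∑ m ∈ Finset.range (n + 1), a m * bellPoly k m s := by
  refine Finset.sum_subset (Finset.range_subset_range.2 (by omega)) fun m _ hm => ?_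
  rw [bellPoly_eq_zero_of_lt s (by simpa using hm), mul_zero]

theorem iteratedDeriv_comp_eq_sum_bellPoly {n : ℕ} {f g : ℝ → ℝ} (hf : ContDiff ℝ n f)
    (hg : ContDiff ℝ n g) (t : ℝ) :
    iteratedDeriv n (fun x => f (g x)) t
      = ∑ m ∈ Finset.range (n + 1),
          iteratedDeriv m f (g t) * bellPoly n m (fun k => iteratedDeriv k g t) := by
  induction n using Nat.strong_induction_on generalizing f with
  | _ n ih =>
  cases n with
  | zero => simp [bellPoly]
  | succ n =>
    push_cast at hf hg
    have hf' : ContDiff ℝ n (deriv f) := hf.deriv'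
    have hg' : ContDiff ℝ n (deriv g) := hg.deriv'
    have hderiv : deriv (fun x => f (g x)) = fun x => deriv g x * deriv f (g x) := by
      funext x
      rw [mul_comm]
      exact ((hf.differentiable (by simp) (g x)).hasDerivAt.comp x
        (hg.differentiable (by simp) x).hasDerivAt).deriv
    have hleibniz := iteratedDeriv_fun_mul (x := t) (g := fun x => deriv f (g x)) hg'.contDiffAt
      (hf'.comp (hg.of_le (by norm_cast; omega))).contDiffAt
    have hinner : ∀ j ∈ Finset.range (n + 1), iteratedDeriv (n - j) (fun x => deriv f (g x)) t
        = ∑ m ∈ Finset.range (n + 1),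
            iteratedDeriv (m + 1) f (g t) * bellPoly (n - j) m (fun k => iteratedDeriv k g t) := by
      intro j _
      rw [ih (n - j) (by omega) (hf'.of_le (by norm_cast; omega)) (hg.of_le (by norm_cast; omega)),
        sum_range_mul_bellPoly_of_le (Nat.sub_le n j)]
      simp only [← iteratedDeriv_succ']
    rw [iteratedDeriv_succ', hderiv, hleibniz, Finset.sum_congr rfl fun j hj => by rw [hinner j hj],
      Finset.sum_range_succ' _ (n + 1), bellPoly_succ_zero, mul_zero, add_zero]
    simp only [bellPoly_succ_succ, ← iteratedDeriv_succ', Finset.mul_sum]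
    rw [Finset.sum_comm]
    refine Finset.sum_congr rfl fun m _ => Finset.sum_congr rfl fun j _ => by ring

/-- Faà di Bruno's formula via Bell polynomials: for i-times continuously
differentiable s₁, s₂ and i ≥ 1,
dⁱ/dtⁱ s₁(s₂(t)) = ∑_{j=1}^{i} s₁^{(j)}(s₂(t))·B_{i,j}(s₂', …, s₂^{(i−j+1)}). -/
theorem stmt_11 (i : ℕ) (hi : 1 ≤ i) (s₁ s₂ : ℝ → ℝ)
    (hs₁ : ContDiff ℝ i s₁) (hs₂ : ContDiff ℝ i s₂) (t : ℝ) :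
    iteratedDeriv i (fun x => s₁ (s₂ x)) t =
      ∑ j ∈ Finset.Icc 1 i,
        iteratedDeriv j s₁ (s₂ t) *
          bellPoly i j (fun k => iteratedDeriv k s₂ t) := by
  obtain ⟨n, rfl⟩ : ∃ n, i = n + 1 := ⟨i - 1, by omega⟩
  rw [iteratedDeriv_comp_eq_sum_bellPoly hs₁ hs₂, Finset.range_eq_Ico,
    Finset.sum_eq_sum_Ico_succ_bot (by omega), bellPoly_succ_zero, mul_zero, zero_add,
    Finset.Ico_add_one_right_eq_Icc]
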